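/- arXiv:0902.4876 — 2 statements merged into one kernel-verified Lean document; each statement's English description precedes it below -/
import Mathlib

section
/- For every simply-connected space Y (with locally finite rational cohomology), the d_1-depth of Y equals the Whitehead length WL(Y). Consequently, the d_1-depth of Y does not depend on the choice of minimal Sullivan model for Y and is a topological invariant. -/
/-!
Scaffold: the quadratic part of a minimal Sullivan model `(∧V, d)` of a simply
connected space `Y` (with locally finite rational cohomology), together with its
associated homotopy Lie algebra `L` (so that `sL = Hom(V, ℚ)`), following
Félix–Halperin–Thomas, §21(e).  The data is encoded through

* the perfect pairing `P v x = ⟨v ; sx⟩` between `V` and `sL`,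
* the trilinear pairing `D v x y = ⟨d₁ v ; sx, sy⟩` recording the quadratic part
  `d₁` of the differential, and
* the Lie bracket `br`, determined by `⟨v ; s[x,y]⟩ = (-1)^{deg y + 1} ⟨d₁ v; sx, sy⟩`.
-/

/-- Data of (the quadratic part of) a minimal Sullivan model of a simply connected
space together with the associated homotopy Lie algebra. -/
structure HomotopyLieData : Type 1 where
  /-- the space of generators of the minimal Sullivan model -/
  V : Type
  /-- the (desuspended) homotopy Lie algebra; `sL = Hom(V, ℚ)` -/
  L : Type
  [addV : AddCommGroup V]
  [modV : Module ℚ V]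
  [addL : AddCommGroup L]
  [modL : Module ℚ L]
  /-- grading of `V` -/
  Vg : ℕ → Submodule ℚ V
  /-- grading of `L` -/
  Lg : ℕ → Submodule ℚ L
  internalV : DirectSum.IsInternal Vg
  internalL : DirectSum.IsInternal Lg
  /-- simple connectivity: no generators in degrees `0`, `1` -/
  Vg_zero : Vg 0 = ⊥
  Vg_one : Vg 1 = ⊥
  /-- local finiteness -/
  locFin : ∀ n, FiniteDimensional ℚ (Vg n)
  /-- the pairing `⟨v ; sx⟩ = (-1)^{deg v} (sx)(v)` between `V` and `sL` -/
  P : V →ₗ[ℚ] L →ₗ[ℚ] ℚ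
  /-- `D v x y = ⟨d₁ v ; sx, sy⟩`, the quadratic part of the differential
  evaluated through the trilinear map
  `⟨v ∧ w; sx, sy⟩ = ⟨v;sx⟩⟨w;sy⟩ + (-1)^{|v||w|}⟨w;sx⟩⟨v;sy⟩` -/
  D : V →ₗ[ℚ] L →ₗ[ℚ] L →ₗ[ℚ] ℚ
  /-- the Lie bracket of `L` -/
  br : L →ₗ[ℚ] L →ₗ[ℚ] L
  P_grade : ∀ {m n : ℕ} (v : V) (x : L), v ∈ Vg m → x ∈ Lg n → m ≠ n + 1 → P v x = 0
  P_perfect_V : ∀ v : V, v ≠ 0 → ∃ x, P v x ≠ 0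
  P_perfect_L : ∀ x : L, x ≠ 0 → ∃ v, P v x ≠ 0
  /-- `sL` is the full (graded) dual of `V` -/
  P_represents : ∀ (n : ℕ) (f : V →ₗ[ℚ] ℚ), ∃ x ∈ Lg n, ∀ v ∈ Vg (n + 1), P v x = f v
  /-- graded symmetry of `⟨d₁ v ; sx, sy⟩` in `sx`, `sy` (`|sx| = deg x + 1`) -/
  D_symm : ∀ {p q : ℕ} (v : V) (x y : L), x ∈ Lg p → y ∈ Lg q →
    D v x y = (-1 : ℚ) ^ ((p + 1) * (q + 1)) * D v y x
  br_grade : ∀ {p q : ℕ} (x y : L), x ∈ Lg p → y ∈ Lg q → br x y ∈ Lg (p + q)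
  /-- the defining formula `⟨v ; s[x,y]⟩ = (-1)^{deg y + 1} ⟨d₁ v ; sx, sy⟩` -/
  br_def : ∀ {q : ℕ} (x y : L) (v : V), y ∈ Lg q →
    P v (br x y) = (-1 : ℚ) ^ (q + 1) * D v x y

attribute [instance] HomotopyLieData.addV HomotopyLieData.modV
attribute [instance] HomotopyLieData.addL HomotopyLieData.modL

namespace HomotopyLieData

variable (M : HomotopyLieData)

/-- One step of the `d₁`-filtration: `stepFilt S = {v | d₁ v ∈ ∧ S}`, expressed via the
pairings: `d₁ v` pairs to zero with any `sx` annihilating `S`. -/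
def stepFilt (S : Submodule ℚ M.V) : Submodule ℚ M.V where
  carrier := {v | ∀ x : M.L, (∀ w ∈ S, M.P w x = 0) → ∀ y : M.L, M.D v x y = 0}
  add_mem' := by
    intro a b ha hb x hx y
    have h1 := ha x hx y
    have h2 := hb x hx y
    simp [map_add, LinearMap.add_apply, h1, h2]
  zero_mem' := by
    intro x hx y
    simp
  smul_mem' := by
    intro c a ha x hx y
    have h1 := ha x hx y
    simp [map_smul, LinearMap.smul_apply, h1]

/-- The filtration `V_0 = {v | d₁ v = 0}`, `V_i = {v | d₁ v ∈ ∧ V_{i-1}}`. -/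
def Vfilt : ℕ → Submodule ℚ M.V
  | 0 => M.stepFilt ⊥
  | n + 1 => M.stepFilt (Vfilt n)

/-- The shifted filtration: `VfiltS n = V_{n-1}` (so `VfiltS 0 = V_{-1} = 0`). -/
def VfiltS : ℕ → Submodule ℚ M.V
  | 0 => ⊥
  | n + 1 => M.Vfilt n

/-- The `d₁`-depth: the greatest `k` with `V_{k-1} ⊊ V_k`. -/
noncomputable def d1Depth : ℕ∞ :=
  sSup ((fun n : ℕ => (n : ℕ∞)) '' {n : ℕ | M.VfiltS n < M.VfiltS (n + 1)})

/-- `[L, L]^{(n)}`:  `[L,L]^{(0)} = L` and `[L,L]^{(l+1)} = [L, [L,L]^{(l)}]`. -/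
def bracketSeries : ℕ → Submodule ℚ M.L
  | 0 => ⊤
  | n + 1 => Submodule.span ℚ {z : M.L | ∃ x y, y ∈ bracketSeries n ∧ z = M.br x y}

/-- The Whitehead length of `L`: the greatest `n` with `[L,L]^{(n)} ≠ 0`. -/
noncomputable def whiteheadLength : ℕ∞ :=
  sSup ((fun n : ℕ => (n : ℕ∞)) '' {n : ℕ | M.bracketSeries n ≠ ⊥})

/-- The iterated bracket `x_{k_n, …, k_0} = [f 0, [f 1, [ …, [f (n-1), f n] …]]]`
(an element of `[L,L]^{(n)}`). -/
def iterBracket : (n : ℕ) → (Fin (n + 1) → M.L) → M.L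
  | 0, f => f 0
  | n + 1, f => M.br (f 0) (iterBracket n (Fin.tail f))

/-- `⟨a ∧ b ; sx, sy⟩` for homogeneous `a`, `b` of degrees `p`, `q`. -/
def wedgeP (p q : ℕ) (a b : M.V) (x y : M.L) : ℚ :=
  M.P a x * M.P b y + (-1 : ℚ) ^ (p * q) * (M.P b x * M.P a y)

/-- The annihilator in `V` of a subspace of `L`, with respect to the pairing `P`. -/
def annih (N : Submodule ℚ M.L) : Submodule ℚ M.V where
  carrier := {v | ∀ z ∈ N, M.P v z = 0}
  add_mem' := by
    intro a b ha hb z hz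
    have h1 := ha z hz
    have h2 := hb z hz
    simp [map_add, LinearMap.add_apply, h1, h2]
  zero_mem' := by
    intro z hz
    simp
  smul_mem' := by
    intro c a ha z hz
    have h1 := ha z hz
    simp [map_smul, LinearMap.smul_apply, h1]

end HomotopyLieData

/-!
The pairing `P` restricts to perfect pairings `V^{q+1} × L_q → ℚ` of finite-dimensional spaces,
so `N ↦ annih N` reverses and reflects inclusions of graded subspaces `N` of `L`. By the defining
formula of the bracket, `d₁ v ∈ ∧ (annih N)` exactly when `v` annihilates `[L, N]`; hence
`V_{n-1} = annih [L,L]^{(n)}`, and the `d₁`-filtration grows strictly at `n` exactly when the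
series `[L,L]^{(n)}` drops strictly at `n`. Since `L` lives in degrees `≥ 1`, `[L,L]^{(n)}` lives
in degrees `> n`; the series therefore has zero intersection, and its last strict drop is at the
last `n` with `[L,L]^{(n)} ≠ 0`. The Whitehead length depends only on the Lie algebra, whence the
invariance.
-/

open DirectSum

theorem Antitone.exists_succ_lt_of_ne_bot {α : Type*} [CompleteLattice α] {B : ℕ → α}
    (hB : Antitone B) (hinf : ⨅ n, B n = ⊥) {n : ℕ} (hn : B n ≠ ⊥) :
    ∃ m ≥ n, B (m + 1) < B m := by
  by_contra! h
  have hconst : ∀ k, B (n + k) = B n := by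
    intro k
    induction k with
    | zero => rfl
    | succ k ih => rw [← ih, ← add_assoc]; exact (hB (Nat.le_succ _)).eq_of_not_lt (h _ (by omega))
  exact hn (eq_bot_iff.2 (hinf ▸ le_iInf fun m => (hconst m).ge.trans (hB (Nat.le_add_left m n))))

theorem Antitone.sSup_setOf_succ_lt_eq_sSup_setOf_ne_bot {α : Type*} [CompleteLattice α]
    {B : ℕ → α} (hB : Antitone B) (hinf : ⨅ n, B n = ⊥) :
    sSup ((fun n : ℕ => (n : ℕ∞)) '' {n | B (n + 1) < B n}) =
      sSup ((fun n : ℕ => (n : ℕ∞)) '' {n | B n ≠ ⊥}) := by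
  refine le_antisymm (sSup_le_sSup (Set.image_mono fun n hn => (bot_le.trans_lt hn).ne'))
    (sSup_le ?_)
  rintro _ ⟨n, hn, rfl⟩
  obtain ⟨m, hnm, hm⟩ := hB.exists_succ_lt_of_ne_bot hinf hn
  exact le_sSup_of_le ⟨m, hm, rfl⟩ (Nat.cast_le.2 hnm)

section Graded

variable {ι R M N : Type*} [DecidableEq ι] [Semiring R] [AddCommMonoid M] [Module R M]
  [AddCommMonoid N] [Module R N] (ℳ : ι → Submodule R M) [Decomposition ℳ]

theorem DirectSum.decompose_lhom_eq_zero_iff {f : M →ₗ[R] N} :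
    f = 0 ↔ ∀ i, ∀ x ∈ ℳ i, f x = 0 :=
  ⟨fun hf _ x _ => by rw [hf, LinearMap.zero_apply],
    fun h => decompose_lhom_ext ℳ fun i => LinearMap.ext fun x => by simpa using h i x x.2⟩

theorem DirectSum.apply_decompose_of_forall_ne {f : M →ₗ[R] N} {i : ι}
    (hf : ∀ j ≠ i, ∀ x ∈ ℳ j, f x = 0) (x : M) : f (decompose ℳ x i) = f x := by
  classical
  conv_rhs => rw [← sum_support_decompose ℳ x]
  rw [map_sum, Finset.sum_eq_single i (fun j _ hj => hf j hj _ (decompose ℳ x j).2)]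
  intro hi
  rw [DFinsupp.notMem_support_iff.mp hi, ZeroMemClass.coe_zero, map_zero]

theorem DirectSum.eq_zero_of_forall_decompose_eq_zero {x : M}
    (h : ∀ i, (decompose ℳ x i : M) = 0) : x = 0 := by
  classical
  rw [← sum_support_decompose ℳ x]
  exact Finset.sum_eq_zero fun i _ => h i

theorem SetLike.IsHomogeneous.le_iff {p q : Submodule R M} (hp : SetLike.IsHomogeneous ℳ p) :
    p ≤ q ↔ ∀ i, ∀ x ∈ p, x ∈ ℳ i → x ∈ q := by
  classical
  refine ⟨fun h _ _ hx _ => h hx, fun h x hx => ?_⟩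
  rw [← sum_support_decompose ℳ x]
  exact sum_mem fun i _ => h i _ (hp i hx) (decompose ℳ x i).2

theorem SetLike.IsHomogeneous.iSup_inf_eq {p : Submodule R M} (hp : SetLike.IsHomogeneous ℳ p) :
    ⨆ i, p ⊓ ℳ i = p :=
  le_antisymm (iSup_le fun _ => inf_le_left)
    ((SetLike.IsHomogeneous.le_iff ℳ hp).2 fun i _ hx hxi => Submodule.mem_iSup_of_mem i ⟨hx, hxi⟩)

theorem SetLike.isHomogeneous_of_le {p : Submodule R M} {i : ι} (hp : p ≤ ℳ i) :
    SetLike.IsHomogeneous ℳ p := by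
  intro j x hx
  by_cases hij : i = j
  · subst hij
    rwa [decompose_of_mem_same ℳ (hp hx)]
  · rw [decompose_of_mem_ne ℳ (hp hx) hij]
    exact zero_mem p

theorem SetLike.IsHomogeneous.iSup {κ : Sort*} {p : κ → Submodule R M}
    (hp : ∀ k, SetLike.IsHomogeneous ℳ (p k)) : SetLike.IsHomogeneous ℳ (⨆ k, p k) := by
  intro i x hx
  refine Submodule.iSup_induction p (motive := fun x => (decompose ℳ x i : M) ∈ ⨆ k, p k) hx
    (fun k x hx => Submodule.mem_iSup_of_mem k (hp k i hx)) (by simp) fun x y hx hy => ?_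
  rw [decompose_add, DirectSum.add_apply, Submodule.coe_add]
  exact add_mem hx hy

end Graded

theorem DirectSum.decompose_eq_zero_of_mem_iSup_add {R M : Type*} [Semiring R] [AddCommMonoid M]
    [Module R M] {ℳ : ℕ → Submodule R M} [Decomposition ℳ] {k q : ℕ} (hq : q < k) {x : M}
    (hx : x ∈ ⨆ j, ℳ (k + j)) : (decompose ℳ x q : M) = 0 := by
  refine Submodule.iSup_induction _ (motive := fun x => (decompose ℳ x q : M) = 0) hx
    (fun j x hx => decompose_of_mem_ne ℳ hx (by omega)) (by simp) fun x y hx hy => ?_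
  rw [decompose_add, DirectSum.add_apply, Submodule.coe_add, hx, hy, add_zero]

namespace HomotopyLieData

variable (M : HomotopyLieData)

noncomputable instance : Decomposition M.Vg := M.internalV.chooseDecomposition
noncomputable instance : Decomposition M.Lg := M.internalL.chooseDecomposition

theorem P_decompose_right {q : ℕ} {w : M.V} (hw : w ∈ M.Vg (q + 1)) (x : M.L) :
    M.P w (decompose M.Lg x q) = M.P w x :=
  apply_decompose_of_forall_ne M.Lg (fun _ hj y hy => M.P_grade w y hw hy (by omega)) x

theorem P_decompose_left {q : ℕ} {y : M.L} (hy : y ∈ M.Lg q) (v : M.V) :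
    M.P (decompose M.Vg v (q + 1)) y = M.P v y :=
  apply_decompose_of_forall_ne M.Vg (f := M.P.flip y) (fun _ hj w hw => M.P_grade w y hw hy hj) v

theorem eq_zero_of_forall_P_eq_zero_left {q : ℕ} {y : M.L} (hy : y ∈ M.Lg q)
    (h : ∀ w ∈ M.Vg (q + 1), M.P w y = 0) : y = 0 := by
  by_contra hy0
  obtain ⟨v, hv⟩ := M.P_perfect_L y hy0
  exact hv (M.P_decompose_left hy v ▸ h _ (decompose M.Vg v (q + 1)).2)

theorem eq_zero_of_forall_P_eq_zero_right {q : ℕ} {w : M.V} (hw : w ∈ M.Vg (q + 1))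
    (h : ∀ y ∈ M.Lg q, M.P w y = 0) : w = 0 := by
  by_contra hw0
  obtain ⟨x, hx⟩ := M.P_perfect_V w hw0
  exact hx (M.P_decompose_right hw x ▸ h _ (decompose M.Lg x q).2)

theorem Lg_zero : M.Lg 0 = ⊥ :=
  eq_bot_iff.2 fun y hy => M.eq_zero_of_forall_P_eq_zero_left hy fun w hw => by
    rw [show w = 0 by simpa [M.Vg_one] using hw, map_zero, LinearMap.zero_apply]

def gradedPairing (q : ℕ) : M.Vg (q + 1) →ₗ[ℚ] M.Lg q →ₗ[ℚ] ℚ :=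
  M.P.compl₁₂ (M.Vg (q + 1)).subtype (M.Lg q).subtype

instance (q : ℕ) : (M.gradedPairing q).IsPerfPair := by
  have := M.locFin (q + 1)
  refine .of_injective (injective_iff_map_eq_zero _ |>.2 fun w hw => ?_)
    (injective_iff_map_eq_zero _ |>.2 fun y hy => ?_)
  · exact Subtype.ext (M.eq_zero_of_forall_P_eq_zero_right w.2 fun y hy =>
      LinearMap.congr_fun hw ⟨y, hy⟩)
  · exact Subtype.ext (M.eq_zero_of_forall_P_eq_zero_left y.2 fun w hw =>
      LinearMap.congr_fun hy ⟨w, hw⟩)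

theorem mem_annih_iff {N : Submodule ℚ M.L} {v : M.V} :
    v ∈ M.annih N ↔ N ≤ LinearMap.ker (M.P v) := Iff.rfl

theorem exists_mem_annih_P_ne_zero {N : Submodule ℚ M.L} (hN : SetLike.IsHomogeneous M.Lg N)
    {q : ℕ} {x : M.L} (hx : x ∈ M.Lg q) (hxN : x ∉ N) :
    ∃ w ∈ M.Vg (q + 1), w ∈ M.annih N ∧ M.P w x ≠ 0 := by
  obtain ⟨f, hfx, hfN⟩ := (N.comap (M.Lg q).subtype).exists_dual_map_eq_bot_of_notMem
    (x := ⟨x, hx⟩) hxN inferInstance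
  obtain ⟨w, rfl⟩ := (LinearMap.IsPerfPair.bijective_left (M.gradedPairing q)).surjective f
  refine ⟨w, w.2, fun z hz => ?_, hfx⟩
  rw [← M.P_decompose_right w.2 z]
  exact (Submodule.eq_bot_iff _).1 hfN _
    (Submodule.mem_map_of_mem (r := (⟨_, (decompose M.Lg z q).2⟩ : M.Lg q)) (hN q hz))

theorem forall_mem_annih_P_eq_zero_iff {N : Submodule ℚ M.L}
    (hN : SetLike.IsHomogeneous M.Lg N) {x : M.L} :
    (∀ w ∈ M.annih N, M.P w x = 0) ↔ x ∈ N := by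
  refine ⟨fun h => (AddSubmonoidClass.IsHomogeneous.mem_iff M.Lg N hN).2 fun q => ?_,
    fun hx _ hw => hw x hx⟩
  by_contra hxN
  obtain ⟨w, hwq, hw, hwx⟩ := M.exists_mem_annih_P_ne_zero hN (decompose M.Lg x q).2 hxN
  exact hwx (by rw [M.P_decompose_right hwq]; exact h w hw)

theorem annih_le_annih_iff {N₁ N₂ : Submodule ℚ M.L} (hN₂ : SetLike.IsHomogeneous M.Lg N₂) :
    M.annih N₂ ≤ M.annih N₁ ↔ N₁ ≤ N₂ :=
  ⟨fun h x hx => (M.forall_mem_annih_P_eq_zero_iff hN₂).1 fun _ hw => h hw x hx,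
    fun h _ hv z hz => hv z (h hz)⟩

theorem annih_lt_annih_iff {N₁ N₂ : Submodule ℚ M.L} (hN₁ : SetLike.IsHomogeneous M.Lg N₁)
    (hN₂ : SetLike.IsHomogeneous M.Lg N₂) : M.annih N₁ < M.annih N₂ ↔ N₂ < N₁ := by
  rw [lt_iff_le_not_ge, lt_iff_le_not_ge, M.annih_le_annih_iff hN₁, M.annih_le_annih_iff hN₂]

theorem annih_top : M.annih ⊤ = ⊥ :=
  eq_bot_iff.2 fun v hv => by_contra fun hv0 =>
    (M.P_perfect_V v hv0).elim fun x hx => hx (hv x trivial)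

theorem bracketSeries_succ (n : ℕ) :
    M.bracketSeries (n + 1) = Submodule.map₂ M.br ⊤ (M.bracketSeries n) := by
  rw [Submodule.map₂_eq_span_image2]
  show Submodule.span ℚ _ = _
  congr 1
  ext z
  simp [eq_comm]

theorem isHomogeneous_map₂_br {N : Submodule ℚ M.L} (hN : SetLike.IsHomogeneous M.Lg N) :
    SetLike.IsHomogeneous M.Lg (Submodule.map₂ M.br ⊤ N) := by
  have hsplit :
      Submodule.map₂ M.br ⊤ N = ⨆ p, ⨆ q, Submodule.map₂ M.br (M.Lg p) (N ⊓ M.Lg q) := by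
    rw [← M.internalL.submodule_iSup_eq_top, Submodule.map₂_iSup_left]
    conv_lhs => rw [← SetLike.IsHomogeneous.iSup_inf_eq M.Lg hN]
    simp_rw [Submodule.map₂_iSup_right]
  rw [hsplit]
  exact SetLike.IsHomogeneous.iSup _ fun p => SetLike.IsHomogeneous.iSup _ fun q =>
    SetLike.isHomogeneous_of_le _ (Submodule.map₂_le.2 fun x hx y hy => M.br_grade x y hx hy.2)

theorem isHomogeneous_bracketSeries (n : ℕ) :
    SetLike.IsHomogeneous M.Lg (M.bracketSeries n) := by
  induction n with
  | zero => exact fun _ _ _ => trivial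
  | succ n ih => rw [bracketSeries_succ]; exact M.isHomogeneous_map₂_br ih

theorem bracketSeries_antitone : Antitone M.bracketSeries := by
  refine antitone_nat_of_succ_le fun n => ?_
  induction n with
  | zero => exact le_top
  | succ n ih =>
    calc M.bracketSeries (n + 2)
        = Submodule.map₂ M.br ⊤ (M.bracketSeries (n + 1)) := M.bracketSeries_succ _
      _ ≤ Submodule.map₂ M.br ⊤ (M.bracketSeries n) := Submodule.map₂_le_map₂_right ih
      _ = M.bracketSeries (n + 1) := (M.bracketSeries_succ n).symm

def degreeAtLeast (k : ℕ) : Submodule ℚ M.L := ⨆ j, M.Lg (k + j)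

theorem degreeAtLeast_one : M.degreeAtLeast 1 = ⊤ := by
  rw [eq_top_iff, ← M.internalL.submodule_iSup_eq_top]
  refine iSup_le fun i => ?_
  cases i with
  | zero => simp [Lg_zero]
  | succ i => exact le_iSup_of_le i (by rw [add_comm])

theorem map₂_br_degreeAtLeast (a b : ℕ) :
    Submodule.map₂ M.br (M.degreeAtLeast a) (M.degreeAtLeast b) ≤ M.degreeAtLeast (a + b) := by
  simp only [degreeAtLeast, Submodule.map₂_iSup_left, Submodule.map₂_iSup_right]
  refine iSup₂_le fun j i => Submodule.map₂_le.2 fun x hx y hy =>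
    Submodule.mem_iSup_of_mem (i + j) ?_
  rw [show a + b + (i + j) = a + i + (b + j) by ring]
  exact M.br_grade x y hx hy

theorem bracketSeries_le_degreeAtLeast (n : ℕ) :
    M.bracketSeries n ≤ M.degreeAtLeast (n + 1) := by
  induction n with
  | zero => simp [degreeAtLeast_one]
  | succ n ih =>
    calc M.bracketSeries (n + 1)
        ≤ Submodule.map₂ M.br (M.degreeAtLeast 1) (M.degreeAtLeast (n + 1)) := by
          rw [bracketSeries_succ, degreeAtLeast_one]
          exact Submodule.map₂_le_map₂_right ih
      _ ≤ M.degreeAtLeast (n + 1 + 1) := add_comm 1 (n + 1) ▸ M.map₂_br_degreeAtLeast 1 (n + 1)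

theorem iInf_bracketSeries : ⨅ n, M.bracketSeries n = ⊥ :=
  eq_bot_iff.2 fun _ hx => (Submodule.mem_bot ℚ).2 <|
    eq_zero_of_forall_decompose_eq_zero M.Lg fun q => decompose_eq_zero_of_mem_iSup_add
      q.lt_succ_self (M.bracketSeries_le_degreeAtLeast q (Submodule.mem_iInf _ |>.1 hx q))

theorem D_flip_eq_zero_iff (v : M.V) {q : ℕ} {y : M.L} (hy : y ∈ M.Lg q) :
    (M.D v).flip y = 0 ↔ M.D v y = 0 := by
  rw [decompose_lhom_eq_zero_iff M.Lg, decompose_lhom_eq_zero_iff M.Lg]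
  refine forall_congr' fun p => forall₂_congr fun x hx => ?_
  rw [LinearMap.flip_apply, M.D_symm v x y hx hy, mul_eq_zero,
    or_iff_right (pow_ne_zero _ (by norm_num))]

theorem forall_P_br_eq_zero_iff (v : M.V) {q : ℕ} {y : M.L} (hy : y ∈ M.Lg q) :
    (∀ x, M.P v (M.br x y) = 0) ↔ M.D v y = 0 := by
  rw [← M.D_flip_eq_zero_iff v hy, LinearMap.ext_iff]
  refine forall_congr' fun x => ?_
  rw [M.br_def x y v hy, mul_eq_zero, or_iff_right (pow_ne_zero _ (by norm_num)),
    LinearMap.flip_apply, LinearMap.zero_apply]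

theorem annih_map₂_br {N : Submodule ℚ M.L} (hN : SetLike.IsHomogeneous M.Lg N) :
    M.annih (Submodule.map₂ M.br ⊤ N) = M.stepFilt (M.annih N) := by
  ext v
  calc v ∈ M.annih (Submodule.map₂ M.br ⊤ N)
      ↔ N ≤ LinearMap.ker ((M.br.compr₂ (M.P v)).flip) := by
        rw [mem_annih_iff, Submodule.map₂_le]
        simp only [Submodule.mem_top, true_implies, LinearMap.mem_ker, SetLike.le_def,
          LinearMap.ext_iff, LinearMap.flip_apply, LinearMap.compr₂_apply, LinearMap.zero_apply]
        exact ⟨fun h y hy x => h x y hy, fun h x y hy => h hy x⟩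
    _ ↔ N ≤ LinearMap.ker (M.D v) := by
        rw [SetLike.IsHomogeneous.le_iff M.Lg hN, SetLike.IsHomogeneous.le_iff M.Lg hN]
        refine forall_congr' fun q => forall₂_congr fun y _ => imp_congr_right fun hy => ?_
        rw [LinearMap.mem_ker, LinearMap.mem_ker, ← M.forall_P_br_eq_zero_iff v hy,
          LinearMap.ext_iff]
        rfl
    _ ↔ v ∈ M.stepFilt (M.annih N) := by
        simp only [stepFilt, Submodule.mem_mk, AddSubmonoid.mem_mk, AddSubsemigroup.mem_mk,
          Set.mem_ofPred_eq, M.forall_mem_annih_P_eq_zero_iff hN, SetLike.le_def,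
          LinearMap.mem_ker, LinearMap.ext_iff, LinearMap.zero_apply]

theorem Vfilt_eq_annih (n : ℕ) : M.Vfilt n = M.annih (M.bracketSeries (n + 1)) := by
  rw [M.bracketSeries_succ, M.annih_map₂_br (M.isHomogeneous_bracketSeries n)]
  cases n with
  | zero => exact congrArg M.stepFilt M.annih_top.symm
  | succ n => exact congrArg M.stepFilt (Vfilt_eq_annih n)

theorem VfiltS_eq_annih (n : ℕ) : M.VfiltS n = M.annih (M.bracketSeries n) := by
  cases n with
  | zero => exact M.annih_top.symm
  | succ n => exact M.Vfilt_eq_annih n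

theorem d1Depth_eq_whiteheadLength : M.d1Depth = M.whiteheadLength := by
  have hdrops : {n | M.VfiltS n < M.VfiltS (n + 1)} =
      {n | M.bracketSeries (n + 1) < M.bracketSeries n} := Set.ext fun n => by
    simp only [Set.mem_ofPred_eq, VfiltS_eq_annih]
    exact M.annih_lt_annih_iff (M.isHomogeneous_bracketSeries n) (M.isHomogeneous_bracketSeries _)
  rw [d1Depth, whiteheadLength, hdrops]
  exact M.bracketSeries_antitone.sSup_setOf_succ_lt_eq_sSup_setOf_ne_bot M.iInf_bracketSeries

theorem map_bracketSeries {M₁ M₂ : HomotopyLieData} (e : M₁.L ≃ₗ[ℚ] M₂.L)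
    (he : ∀ x y, e (M₁.br x y) = M₂.br (e x) (e y)) (n : ℕ) :
    (M₁.bracketSeries n).map (e : M₁.L →ₗ[ℚ] M₂.L) = M₂.bracketSeries n := by
  induction n with
  | zero => exact (Submodule.map_top _).trans e.range
  | succ n ih =>
    have hbr : M₁.br.compr₂ (e : M₁.L →ₗ[ℚ] M₂.L) = M₂.br.compl₁₂ (e : M₁.L →ₗ[ℚ] M₂.L) e :=
      LinearMap.ext₂ he
    rw [M₁.bracketSeries_succ, M₂.bracketSeries_succ, Submodule.map_map₂, hbr,
      ← Submodule.map₂_map_map, ih, Submodule.map_top, e.range]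

theorem whiteheadLength_eq_of_linearEquiv {M₁ M₂ : HomotopyLieData} (e : M₁.L ≃ₗ[ℚ] M₂.L)
    (he : ∀ x y, e (M₁.br x y) = M₂.br (e x) (e y)) :
    M₁.whiteheadLength = M₂.whiteheadLength := by
  simp only [whiteheadLength, ← map_bracketSeries e he, ne_eq, Submodule.map_eq_bot_iff]

end HomotopyLieData

/-- **Theorem (d₁-depth equals Whitehead length).**
For every simply connected space `Y` (with locally finite rational cohomology), encoded
by the data `M` of a minimal Sullivan model together with its homotopy Lie algebra
`L = L_Y = π_*(ΩY) ⊗ ℚ`, the `d₁`-depth equals the Whitehead length `WL(Y)`.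
Consequently the `d₁`-depth does not depend on the choice of the minimal Sullivan model:
any two such models have isomorphic homotopy Lie algebras, and isomorphic (graded)
homotopy Lie algebras give equal `d₁`-depths, so it is a topological invariant. -/
theorem d1Depth_eq_whiteheadLength :
    (∀ M : HomotopyLieData, M.d1Depth = M.whiteheadLength) ∧
    (∀ M₁ M₂ : HomotopyLieData,
      (∃ e : M₁.L ≃ₗ[ℚ] M₂.L,
        (∀ x y, e (M₁.br x y) = M₂.br (e x) (e y)) ∧
        (∀ n, (M₁.Lg n).map (e : M₁.L →ₗ[ℚ] M₂.L) = M₂.Lg n)) →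
      M₁.d1Depth = M₂.d1Depth) := by
  refine ⟨fun M => M.d1Depth_eq_whiteheadLength, ?_⟩
  rintro M₁ M₂ ⟨e, he, -⟩
  rw [M₁.d1Depth_eq_whiteheadLength, M₂.d1Depth_eq_whiteheadLength,
    HomotopyLieData.whiteheadLength_eq_of_linearEquiv e he]
end

section
/- Let L be the homotopy Lie algebra associated with a minimal Sullivan model (∧V,d) of a simply-connected space Y. Then d_1-depth(Y) ≥ WL(L), where WL(L) is the greatest integer n such that [L,L]^{(n)} ≠ 0. -/
/-!
Under the pairing of `V` with `sL`, the `d₁`-filtration is controlled by the bracket series: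
if `v ∈ V_{k-1}` then `v` annihilates `[L,L]^{(k)}`, because `⟨v ; s[x,y]⟩` is, up to sign,
`⟨d₁ v ; sx, sy⟩` and `y ∈ [L,L]^{(k-1)}` annihilates `V_{k-2}`. On the other hand the filtration
is exhaustive, for degree reasons: if `sx` annihilates all generators of degree `≤ k + 1`, then
`x` lives in degrees `> k`, so `d₁` of a generator of degree `≤ k + 2` pairs trivially with `sx`;
hence the generators of degree `q + 1` lie in `V_{q-1}`. So if `[L,L]^{(n)} ≠ 0`, the filtration
cannot be stationary from `V_{n-1}` on: it would reach all of `V`, which pairs trivially with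
`[L,L]^{(n)}`.
-/

theorem iSup_nat_eq_iSup_fin_sup_iSup_add {α : Type*} [CompleteLattice α] (f : ℕ → α)
    (k : ℕ) : ⨆ p, f p = (⨆ p : Fin k, f p) ⊔ ⨆ p, f (p + k) := by
  refine le_antisymm (iSup_le fun p => ?_)
    (sup_le (iSup_le fun p => le_iSup f p) (iSup_le fun p => le_iSup f (p + k)))
  by_cases hp : p < k
  · exact le_sup_of_le_left (le_iSup_of_le ⟨p, hp⟩ le_rfl)
  · refine le_sup_of_le_right (le_iSup_of_le (p - k) ?_)
    rw [Nat.sub_add_cancel (not_lt.1 hp)]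

theorem LinearMap.apply_mem_of_mem_iSup {R M N P ι κ : Type*} [CommSemiring R]
    [AddCommMonoid M] [AddCommMonoid N] [AddCommMonoid P] [Module R M] [Module R N]
    [Module R P] (f : M →ₗ[R] N →ₗ[R] P) {A : ι → Submodule R M} {B : κ → Submodule R N}
    {T : Submodule R P} (h : ∀ i j, ∀ a ∈ A i, ∀ b ∈ B j, f a b ∈ T) {x : M} {y : N}
    (hx : x ∈ ⨆ i, A i) (hy : y ∈ ⨆ j, B j) : f x y ∈ T := by
  have hxy := Submodule.apply_mem_map₂ f hx hy
  simp_rw [Submodule.map₂_iSup_left, Submodule.map₂_iSup_right] at hxy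
  exact iSup₂_le (fun i j => Submodule.map₂_le.2 (h i j)) hxy

namespace HomotopyLieData

variable (M : HomotopyLieData)

lemma mem_iSup_Lg (x : M.L) : x ∈ ⨆ p, M.Lg p := by
  rw [M.internalL.submodule_iSup_eq_top]
  exact Submodule.mem_top

lemma eq_zero_of_forall_P_eq_zero {x : M.L} (h : ∀ m, ∀ v ∈ M.Vg m, M.P v x = 0) : x = 0 := by
  by_contra hx
  obtain ⟨v, hv⟩ := M.P_perfect_L x hx
  have hker : ⨆ m, M.Vg m ≤ LinearMap.ker (M.P.flip x) := iSup_le fun m w hw => h m w hw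
  rw [M.internalV.submodule_iSup_eq_top] at hker
  exact hv (hker Submodule.mem_top)

lemma P_eq_zero_of_mem_iSup {ι : Type*} {deg : ι → ℕ} {m : ℕ} {v : M.V} {x : M.L}
    (hv : v ∈ M.Vg m) (hx : x ∈ ⨆ i, M.Lg (deg i)) (hdeg : ∀ i, m ≠ deg i + 1) :
    M.P v x = 0 := by
  have hker : ⨆ i, M.Lg (deg i) ≤ LinearMap.ker (M.P v) :=
    iSup_le fun i z hz => M.P_grade v z hv hz (hdeg i)
  exact hker hx

lemma mem_iSup_Lg_add_of_forall_P_eq_zero {k : ℕ} {x : M.L}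
    (h : ∀ p ≤ k, ∀ v ∈ M.Vg (p + 1), M.P v x = 0) : x ∈ ⨆ p, M.Lg (p + (k + 1)) := by
  have hx := M.mem_iSup_Lg x
  rw [iSup_nat_eq_iSup_fin_sup_iSup_add _ (k + 1)] at hx
  obtain ⟨lo, hlo, hi, hhi, rfl⟩ := Submodule.mem_sup.1 hx
  have hlo0 : lo = 0 := M.eq_zero_of_forall_P_eq_zero fun m v hv => by
    rcases m with _ | p
    · exact M.P_eq_zero_of_mem_iSup hv hlo fun i => by omega
    by_cases hp : p ≤ k
    · have hv0 := h p hp v hv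
      rwa [map_add, M.P_eq_zero_of_mem_iSup hv hhi fun i => by omega, add_zero] at hv0
    · exact M.P_eq_zero_of_mem_iSup hv hlo fun i => by have := i.isLt; omega
  rwa [hlo0, zero_add]

lemma mem_iSup_Lg_succ (y : M.L) : y ∈ ⨆ r, M.Lg (r + 1) := by
  refine M.mem_iSup_Lg_add_of_forall_P_eq_zero (k := 0) fun p hp v hv => ?_
  obtain rfl : p = 0 := Nat.le_zero.1 hp
  rw [M.Vg_one, Submodule.mem_bot] at hv
  rw [hv, map_zero, LinearMap.zero_apply]

lemma P_br_eq_zero_iff {q : ℕ} (v : M.V) (x : M.L) {y : M.L} (hy : y ∈ M.Lg q) :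
    M.P v (M.br x y) = 0 ↔ M.D v x y = 0 := by
  rw [M.br_def x y v hy, mul_eq_zero, or_iff_right (pow_ne_zero _ (by norm_num))]

lemma D_eq_zero_comm {p q : ℕ} (v : M.V) {x y : M.L} (hx : x ∈ M.Lg p) (hy : y ∈ M.Lg q) :
    M.D v x y = 0 ↔ M.D v y x = 0 := by
  rw [M.D_symm v x y hx hy, mul_eq_zero, or_iff_right (pow_ne_zero _ (by norm_num))]

lemma D_eq_zero_of_ne {m p r : ℕ} {v : M.V} {x y : M.L} (hv : v ∈ M.Vg m) (hx : x ∈ M.Lg p)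
    (hy : y ∈ M.Lg r) (h : m ≠ p + r + 1) : M.D v x y = 0 :=
  (M.P_br_eq_zero_iff v x hy).1 (M.P_grade v _ hv (M.br_grade x y hx hy) h)

lemma bracketSeries_le_iSup_inf_Lg (n : ℕ) :
    M.bracketSeries n ≤ ⨆ q, (M.bracketSeries n ⊓ M.Lg q) := by
  induction n with
  | zero =>
    simp only [bracketSeries, top_inf_eq, M.internalL.submodule_iSup_eq_top, le_refl]
  | succ n ih =>
    refine Submodule.span_le.2 ?_
    rintro _ ⟨x, y, hy, rfl⟩
    refine M.br.apply_mem_of_mem_iSup (fun p q x' hx' y' hy' => ?_) (M.mem_iSup_Lg x) (ih hy)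
    refine Submodule.mem_iSup_of_mem (p + q) ⟨?_, M.br_grade x' y' hx' hy'.2⟩
    exact Submodule.subset_span ⟨x', y', hy'.1, rfl⟩

lemma stepFilt_mono {S T : Submodule ℚ M.V} (h : S ≤ T) : M.stepFilt S ≤ M.stepFilt T :=
  fun _ hv x hx => hv x fun w hw => hx w (h hw)

lemma VfiltS_succ (k : ℕ) : M.VfiltS (k + 1) = M.stepFilt (M.VfiltS k) := by
  cases k <;> rfl

lemma VfiltS_mono : Monotone M.VfiltS := by
  refine monotone_nat_of_le_succ fun k => ?_
  induction k with
  | zero => exact bot_le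
  | succ k ih =>
    simpa only [← M.VfiltS_succ] using M.stepFilt_mono ih

lemma VfiltS_le_annih_bracketSeries (k : ℕ) : M.VfiltS k ≤ M.annih (M.bracketSeries k) := by
  induction k with
  | zero => exact bot_le
  | succ k ih =>
    rw [M.VfiltS_succ]
    intro v hv z hz
    refine Submodule.span_induction (p := fun z _ => M.P v z = 0) ?_ (map_zero _)
      (fun a b _ _ ha hb => by rw [map_add, ha, hb, add_zero])
      (fun c a _ ha => by rw [map_smul, ha, smul_zero]) hz
    rintro _ ⟨x, y, hy, rfl⟩
    refine (Submodule.mem_bot ℚ).1 <| (M.br.compr₂ (M.P v)).apply_mem_of_mem_iSup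
      (fun p q x' hx' y' hy' => ?_) (M.mem_iSup_Lg x) (M.bracketSeries_le_iSup_inf_Lg k hy)
    rw [LinearMap.compr₂_apply, Submodule.mem_bot, M.P_br_eq_zero_iff v x' hy'.2,
      M.D_eq_zero_comm v hx' hy'.2]
    exact hv y' (fun w hw => ih hw y' hy'.1) x'

lemma Vg_succ_le_VfiltS {q k : ℕ} (h : q ≤ k) : M.Vg (q + 1) ≤ M.VfiltS k := by
  induction k generalizing q with
  | zero =>
    rw [Nat.le_zero.1 h, M.Vg_one]
    exact bot_le
  | succ k ih =>
    rw [M.VfiltS_succ]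
    intro v hv x hx y
    have hx' : x ∈ ⨆ p, M.Lg (p + (k + 1)) :=
      M.mem_iSup_Lg_add_of_forall_P_eq_zero fun p hp w hw => hx w (ih hp hw)
    refine (Submodule.mem_bot ℚ).1 <| (M.D v).apply_mem_of_mem_iSup
      (fun p r x' hx' y' hy' => (Submodule.mem_bot ℚ).2 (M.D_eq_zero_of_ne hv hx' hy' (by omega)))
      hx' (M.mem_iSup_Lg_succ y)

lemma bracketSeries_eq_bot_of_VfiltS_eq_top {n : ℕ} (h : M.VfiltS n = ⊤) :
    M.bracketSeries n = ⊥ := by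
  refine (Submodule.eq_bot_iff _).2 fun z hz => ?_
  by_contra hne
  obtain ⟨v, hv⟩ := M.P_perfect_L z hne
  exact hv (M.VfiltS_le_annih_bracketSeries n (h ▸ Submodule.mem_top) z hz)

lemma exists_VfiltS_lt_VfiltS_succ {n : ℕ} (h : M.bracketSeries n ≠ ⊥) :
    ∃ m, n ≤ m ∧ M.VfiltS m < M.VfiltS (m + 1) := by
  by_contra! hstable
  have hconst : ∀ k ≥ n, M.VfiltS k = M.VfiltS n :=
    Nat.le_induction rfl fun k hk ih =>
      ((M.VfiltS_mono k.le_succ).eq_of_not_lt (hstable k hk)).symm.trans ih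
  refine h (M.bracketSeries_eq_bot_of_VfiltS_eq_top (eq_top_iff.2 ?_))
  rw [← M.internalV.submodule_iSup_eq_top]
  refine iSup_le fun m => ?_
  rcases m with _ | q
  · rw [M.Vg_zero]
    exact bot_le
  · rw [← hconst (max q n) (le_max_right q n)]
    exact M.Vg_succ_le_VfiltS (le_max_left q n)

end HomotopyLieData

/-- **Proposition 4.2** (`d₁`-depth ≥ Whitehead length).  Let `L` be the homotopy Lie
algebra associated with a minimal Sullivan model `(∧V, d)` of a simply connected space
`Y`.  Then `d₁-depth(Y) ≥ WL(L)`, where `WL(L)` is the greatest integer `n` such that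
`[L,L]^{(n)} ≠ 0`. -/
theorem whiteheadLength_le_d1Depth (M : HomotopyLieData) :
    M.whiteheadLength ≤ M.d1Depth := by
  refine sSup_le ?_
  rintro _ ⟨n, hn, rfl⟩
  obtain ⟨m, hnm, hm⟩ := M.exists_VfiltS_lt_VfiltS_succ hn
  calc (n : ℕ∞) ≤ m := Nat.cast_le.2 hnm
    _ ≤ M.d1Depth := le_sSup ⟨m, hm, rfl⟩
end
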